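/- arXiv:1911.02149 — 4 statements merged into one kernel-verified Lean document; each statement's English description precedes it below -/
import Mathlib

section
/- Let θ ∈ (π/2, π) and let γ₁ > 0 and γ₂ > 0 be real numbers. Then for every nonzero complex number z with |arg z| ≤ π − θ one has γ₁|z| + γ₂ ≤ |γ₁ z + γ₂| / sin(θ/2). -/
open Real Complex

/-!
Write `|γ₁ z + γ₂|² = a² + b² + 2 a b cos(arg z)` with `a = γ₁|z|`, `b = γ₂`. On the sector,
`cos(arg z) ≥ cos(π − θ) = 2 sin²(θ/2) − 1`, and the resulting lower bound exceeds
`sin²(θ/2) (a + b)²` by `cos²(θ/2) (a − b)² ≥ 0`.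
-/

lemma sq_mul_sq_add_le_of_mul_le {a b s x : ℝ} (hb : 0 ≤ b) (hs : s ^ 2 ≤ 1)
    (hx : a * (2 * s ^ 2 - 1) ≤ x) :
    s ^ 2 * (a + b) ^ 2 ≤ a ^ 2 + b ^ 2 + 2 * b * x := by
  linear_combination mul_nonneg (sub_nonneg.2 hs) (sq_nonneg (a - b)) +
    2 * mul_nonneg hb (sub_nonneg.2 hx)

lemma Complex.sq_norm_add_ofReal (w : ℂ) (b : ℝ) :
    ‖w + b‖ ^ 2 = ‖w‖ ^ 2 + b ^ 2 + 2 * b * w.re := by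
  simp only [Complex.sq_norm, normSq_add, normSq_ofReal, mul_re, conj_ofReal, ofReal_re,
    ofReal_im, mul_zero, sub_zero]
  ring

lemma Complex.norm_mul_cos_le_re_of_abs_arg_le {w : ℂ} {α : ℝ} (hα : α ≤ π)
    (harg : |w.arg| ≤ α) : ‖w‖ * Real.cos α ≤ w.re := by
  rw [← norm_mul_cos_arg w, ← Real.cos_abs w.arg]
  exact mul_le_mul_of_nonneg_left
    (Real.cos_le_cos_of_nonneg_of_le_pi (abs_nonneg _) hα harg) (norm_nonneg w)

lemma Complex.sin_half_mul_norm_add_le_norm_add_ofReal {w : ℂ} {b θ : ℝ} (hθ : 0 ≤ θ)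
    (hb : 0 ≤ b) (harg : |w.arg| ≤ π - θ) :
    Real.sin (θ / 2) * (‖w‖ + b) ≤ ‖w + b‖ := by
  have hcos : Real.cos (π - θ) = 2 * Real.sin (θ / 2) ^ 2 - 1 := by
    have h := Real.cos_two_mul_eq_one_sub (θ / 2)
    rw [show 2 * (θ / 2) = θ by ring] at h
    rw [Real.cos_pi_sub, h]
    ring
  have hre := norm_mul_cos_le_re_of_abs_arg_le (by linarith) harg
  rw [hcos] at hre
  refine le_of_sq_le_sq ?_ (norm_nonneg _)
  rw [mul_pow, sq_norm_add_ofReal]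
  exact sq_mul_sq_add_le_of_mul_le hb (sin_sq_le_one _) hre

theorem stmt_0_general (θ γ₁ γ₂ : ℝ) (hθ : θ ∈ Set.Ioo (Real.pi / 2) Real.pi)
    (hγ₁ : 0 < γ₁) (hγ₂ : 0 < γ₂) (z : ℂ)
    (harg : |z.arg| ≤ Real.pi - θ) :
    γ₁ * ‖z‖ + γ₂ ≤
      ‖(γ₁ : ℂ) * z + (γ₂ : ℂ)‖ / Real.sin (θ / 2) := by
  have hθ₀ : 0 < θ := by linarith [hθ.1, pi_pos]
  have hs : 0 < Real.sin (θ / 2) :=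
    Real.sin_pos_of_pos_of_lt_pi (by linarith) (by linarith [hθ.2])
  have hnorm : ‖(γ₁ : ℂ) * z‖ = γ₁ * ‖z‖ := by
    rw [norm_mul, norm_real, Real.norm_of_nonneg hγ₁.le]
  rw [le_div_iff₀ hs, mul_comm, ← hnorm]
  exact sin_half_mul_norm_add_le_norm_add_ofReal hθ₀.le hγ₂.le (by rwa [arg_real_mul z hγ₁])

/-- Sector inequality (Lemma 4.1): for θ ∈ (π/2, π), γ₁, γ₂ > 0 and z ≠ 0 with
|arg z| ≤ π − θ, one has γ₁|z| + γ₂ ≤ |γ₁ z + γ₂| / sin(θ/2). -/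
theorem stmt_0 (θ γ₁ γ₂ : ℝ) (hθ : θ ∈ Set.Ioo (Real.pi / 2) Real.pi)
    (hγ₁ : 0 < γ₁) (hγ₂ : 0 < γ₂) (z : ℂ) (hz : z ≠ 0)
    (harg : |z.arg| ≤ Real.pi - θ) :
    γ₁ * ‖z‖ + γ₂ ≤
      ‖(γ₁ : ℂ) * z + (γ₂ : ℂ)‖ / Real.sin (θ / 2) :=
  stmt_0_general θ γ₁ γ₂ hθ hγ₁ hγ₂ z harg
end

section
/- For every real L ≥ 0 and every real number γ there exist θ ∈ (π/2, π), κ > 0, τ* > 0 and a constant C > 0 such that for every τ ∈ (0, τ*], every complex number w with |w| ≤ L, and every z on the contour Γ^τ_{θ,κ}, one has |(z+w)^γ − (δ_{τ,2}(e^{−τ(z+w)}))^γ| ≤ C τ² |z|^{γ+2}, where complex powers are taken with the principal branch. -/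
/-!
Put `λ = z + w` and `x = τλ`, so that `δ_{τ,2}(e^{-τλ}) = f(x)/τ` with
`f(x) = (1 - e^{-x}) + (1 - e^{-x})²/2`. Taking `κ = 10(L + 1)` gives `10|w| ≤ |z|` on the
contour, so `|λ|` is comparable to `|z|` and `arg λ` stays within `3/20` of `arg z`.

If `τ|z|` is small, `f(x) = x(1 + s)` with `|s| ≤ 2|x|²`; the arguments add, so
`(f(x)/τ)^γ = λ^γ (1 + s)^γ` and the difference is
`|λ|^γ |(1 + s)^γ - 1| = O(|γ| τ² |λ|^{γ+2})`.

If `τ|z|` is bounded below by some `ε > 0`, then on the rays `τ|z| ≤ π / sin θ` (the arc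
`|z| = κ` lies in the first case because `τ* = ε/κ`), so `x` ranges over a compact annular
sector of radius `< 2π`. It avoids the zeros `2πiℤ ∪ (-log 3 + 2πiℤ)` of `f`, hence `|f(x)|`
is bounded above and below there. Both powers are then `O(|z|^γ)`, which is `O(τ²|z|^{γ+2})`
since `τ|z| ≥ ε`.
-/

open Real Complex

lemma rpow_le_mul_rpow_of_le_mul_of_le_mul {p q R : ℝ} (hp : 0 < p) (hq : 0 < q)
    (hpq : p ≤ R * q) (hqp : q ≤ R * p) (γ : ℝ) : p ^ γ ≤ R ^ |γ| * q ^ γ := by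
  have hR : 0 < R := pos_of_mul_pos_left (hp.trans_le hpq) hq.le
  rcases le_total 0 γ with hγ | hγ
  · calc p ^ γ ≤ (R * q) ^ γ := rpow_le_rpow hp.le hpq hγ
      _ = R ^ |γ| * q ^ γ := by rw [abs_of_nonneg hγ, mul_rpow hR.le hq.le]
  · calc p ^ γ ≤ (q / R) ^ γ :=
          rpow_le_rpow_of_nonpos (div_pos hq hR) (by rwa [div_le_iff₀' hR]) hγ
      _ = R ^ |γ| * q ^ γ := by
          rw [abs_of_nonpos hγ, div_rpow hq.le hR.le, rpow_neg hR.le, div_eq_inv_mul]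

lemma norm_cpow_sub_cpow_le_of_le_mul {a b : ℂ} {r R : ℝ} (hr : 0 < r)
    (ha : ‖a‖ ≤ R * r) (ha' : r ≤ R * ‖a‖) (hb : ‖b‖ ≤ R * r) (hb' : r ≤ R * ‖b‖) (γ : ℝ) :
    ‖a ^ (γ : ℂ) - b ^ (γ : ℂ)‖ ≤ 2 * R ^ |γ| * r ^ γ := by
  have hR : 0 ≤ R := nonneg_of_mul_nonneg_left ((norm_nonneg a).trans ha) hr
  have ha0 : 0 < ‖a‖ := pos_of_mul_pos_right (hr.trans_le ha') hR
  have hb0 : 0 < ‖b‖ := pos_of_mul_pos_right (hr.trans_le hb') hR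
  calc ‖a ^ (γ : ℂ) - b ^ (γ : ℂ)‖ ≤ ‖a‖ ^ γ + ‖b‖ ^ γ := by
        simpa only [norm_cpow_real] using norm_sub_le (a ^ (γ : ℂ)) (b ^ (γ : ℂ))
    _ ≤ R ^ |γ| * r ^ γ + R ^ |γ| * r ^ γ := by
        gcongr
        exacts [rpow_le_mul_rpow_of_le_mul_of_le_mul ha0 hr ha ha' γ,
          rpow_le_mul_rpow_of_le_mul_of_le_mul hb0 hr hb hb' γ]
    _ = 2 * R ^ |γ| * r ^ γ := by ring

lemma one_add_ne_zero_of_norm_le {s : ℂ} (hs : ‖s‖ ≤ 1 / 2) : 1 + s ≠ 0 := by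
  intro h
  rw [show s = -1 by linear_combination h] at hs
  norm_num at hs

lemma abs_arg_one_add_le {s : ℂ} (hs : ‖s‖ ≤ 1 / 2) : |arg (1 + s)| ≤ 3 / 2 * ‖s‖ :=
  calc |arg (1 + s)| = |(log (1 + s)).im| := by rw [log_im]
    _ ≤ ‖log (1 + s)‖ := abs_im_le_norm _
    _ ≤ 3 / 2 * ‖s‖ := norm_log_one_add_half_le_self hs

lemma arg_add_arg_one_add_mem {a s : ℂ} (hs : ‖s‖ ≤ 1 / 2) (h : |arg a| + 3 / 2 * ‖s‖ < π) :
    arg a + arg (1 + s) ∈ Set.Ioc (-π) π := by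
  have hs' := abs_le.mp (abs_arg_one_add_le hs)
  constructor <;> linarith [neg_abs_le (arg a), le_abs_self (arg a)]

lemma mul_cpow_of_arg_add_arg_mem {a b : ℂ} (ha : a ≠ 0) (hb : b ≠ 0)
    (h : arg a + arg b ∈ Set.Ioc (-π) π) (c : ℂ) : (a * b) ^ c = a ^ c * b ^ c := by
  rw [cpow_def_of_ne_zero (mul_ne_zero ha hb), log_mul ha hb h, add_mul, Complex.exp_add,
    ← cpow_def_of_ne_zero ha, ← cpow_def_of_ne_zero hb]

lemma norm_one_add_cpow_sub_one_le {s : ℂ} {γ : ℝ} (hs : ‖s‖ ≤ 1 / 2)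
    (hγ : 3 / 2 * |γ| * ‖s‖ ≤ 1) : ‖(1 + s) ^ (γ : ℂ) - 1‖ ≤ 3 * |γ| * ‖s‖ := by
  have hlog : ‖log (1 + s) * γ‖ ≤ 3 / 2 * |γ| * ‖s‖ := by
    rw [norm_mul, norm_real, Real.norm_eq_abs]
    nlinarith [norm_log_one_add_half_le_self hs, abs_nonneg γ]
  rw [cpow_def_of_ne_zero (one_add_ne_zero_of_norm_le hs)]
  linarith [norm_exp_sub_one_le (hlog.trans hγ)]

lemma norm_add_bounds_of_ten_mul_norm_le {z w : ℂ} (hw : 10 * ‖w‖ ≤ ‖z‖) :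
    9 / 10 * ‖z‖ ≤ ‖z + w‖ ∧ ‖z + w‖ ≤ 11 / 10 * ‖z‖ := by
  have := norm_sub_le (z + w) w
  rw [add_sub_cancel_right] at this
  constructor <;> linarith [norm_add_le z w]

lemma abs_arg_add_le_of_ten_mul_norm_le {z w : ℂ} (hz : z ≠ 0) (hw : 10 * ‖w‖ ≤ ‖z‖)
    (harg : |arg z| < π - 3 / 20) : |arg (z + w)| ≤ |arg z| + 3 / 20 := by
  have hs : ‖w / z‖ ≤ 1 / 10 := by
    rw [norm_div, div_le_iff₀ (norm_pos_iff.mpr hz)]; linarith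
  have hzw : z + w = z * (1 + w / z) := by field_simp
  rw [hzw, arg_mul hz (one_add_ne_zero_of_norm_le (by linarith))
    (arg_add_arg_one_add_mem (by linarith) (by linarith))]
  linarith [abs_add_le (arg z) (arg (1 + w / z)), abs_arg_one_add_le (s := w / z) (by linarith)]

lemma eq_neg_ofReal_of_exp_neg_eq {x : ℂ} {c : ℝ} (h : cexp (-x) = cexp c) (hx : ‖x‖ < 2 * π) :
    x = -c := by
  obtain ⟨n, hn⟩ := exp_eq_exp_iff_exists_int.mp h
  have hn0 : n = 0 := by
    have him : x.im = -(2 * π * n) := by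
      linear_combination -(by simpa using congrArg im hn : -x.im = n * (2 * π))
    by_contra hne
    have h1 : (1 : ℝ) ≤ |(n : ℝ)| := by exact_mod_cast Int.one_le_abs hne
    have h2 : 2 * π * |(n : ℝ)| ≤ ‖x‖ := by
      simpa [him, abs_mul, abs_of_pos pi_pos] using abs_im_le_norm x
    nlinarith [pi_pos]
  rw [hn0, Int.cast_zero, zero_mul, add_zero] at hn
  linear_combination -hn

/-- `bdf2Symbol x = τ · δ_{τ,2}(e^{-x})` for every `τ > 0`. -/
noncomputable def bdf2Symbol (x : ℂ) : ℂ := (1 - exp (-x)) + (1 - exp (-x)) ^ 2 / 2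

lemma norm_bdf2Symbol_sub_self_le {x : ℂ} (hx : ‖x‖ ≤ 1) :
    ‖bdf2Symbol x - x‖ ≤ 2 * ‖x‖ ^ 3 := by
  set p := exp (-x) - (1 - x + x ^ 2 / 2)
  have hp : ‖p‖ ≤ 2 / 9 * ‖x‖ ^ 3 := by
    have h := Complex.exp_bound (x := -x) (by rwa [norm_neg]) (n := 3) (by norm_num)
    norm_num [Finset.sum_range_succ, Nat.factorial] at h
    rwa [← sub_eq_add_neg, mul_comm] at h
  set q := x ^ 2 / 2 + p
  have hq : ‖q‖ ≤ ‖x‖ ^ 2 := by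
    calc ‖q‖ ≤ ‖x‖ ^ 2 / 2 + 2 / 9 * ‖x‖ ^ 3 := by
          refine (norm_add_le _ _).trans ?_
          rw [norm_div, norm_pow, RCLike.norm_ofNat]
          gcongr
      _ ≤ ‖x‖ ^ 2 := by nlinarith [norm_nonneg x, pow_le_one₀ (norm_nonneg x) hx (n := 1)]
  -- `1 - e^{-x} = x - q`
  have hid : bdf2Symbol x - x = -p - x * q + q ^ 2 / 2 := by
    simp only [bdf2Symbol, p, q]; ring
  calc ‖bdf2Symbol x - x‖ ≤ ‖p‖ + ‖x‖ * ‖q‖ + ‖q‖ ^ 2 / 2 := by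
        rw [hid]
        refine (norm_add_le _ _).trans ?_
        simp only [norm_div, norm_pow, RCLike.norm_ofNat, ← norm_mul, ← norm_neg p]
        gcongr
        exact norm_sub_le _ _
    _ ≤ 2 / 9 * ‖x‖ ^ 3 + ‖x‖ * ‖x‖ ^ 2 + (‖x‖ ^ 2) ^ 2 / 2 := by gcongr
    _ ≤ 2 * ‖x‖ ^ 3 := by nlinarith [norm_nonneg x, pow_le_one₀ (norm_nonneg x) hx (n := 1)]

lemma bdf2Symbol_ne_zero {x : ℂ} (hx : x ∈ slitPlane) (hxπ : ‖x‖ < 2 * π) :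
    bdf2Symbol x ≠ 0 := by
  have hroot : ∀ c : ℝ, 0 ≤ c → cexp (-x) ≠ cexp c := fun c hc h ↦ by
    rw [eq_neg_ofReal_of_exp_neg_eq h hxπ, ← ofReal_neg, ofReal_mem_slitPlane] at hx
    linarith
  have hfactor :
      bdf2Symbol x = (cexp 0 - cexp (-x)) * (cexp (Real.log 3 : ℂ) - cexp (-x)) / 2 := by
    rw [← ofReal_exp, Real.exp_log (by norm_num), Complex.exp_zero, bdf2Symbol]
    push_cast
    ring
  rw [hfactor]
  refine div_ne_zero (mul_ne_zero ?_ ?_) two_ne_zero <;> rw [sub_ne_zero]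
  · exact (by simpa using hroot 0 le_rfl : cexp (-x) ≠ cexp 0).symm
  · exact (hroot _ (Real.log_nonneg (by norm_num))).symm

lemma exists_bounds_norm_bdf2Symbol {ε M φ : ℝ} (hε : 0 < ε) (hM : M < 2 * π) (hφ₀ : 0 ≤ φ)
    (hφ : φ < π) : ∃ m > 0, ∃ c, ∀ x : ℂ, ε ≤ ‖x‖ → ‖x‖ ≤ M → |arg x| ≤ φ →
      m ≤ ‖bdf2Symbol x‖ ∧ ‖bdf2Symbol x‖ ≤ c := by
  set K := {x : ℂ | ε ≤ ‖x‖ ∧ ‖x‖ ≤ M ∧ ‖x‖ * Real.cos φ ≤ x.re}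
  have hK : IsCompact K := by
    refine (isCompact_closedBall 0 M).of_isClosed_subset ?_
      fun x hx ↦ mem_closedBall_zero_iff.mpr hx.2.1
    exact (isClosed_le continuous_const continuous_norm).inter
      ((isClosed_le continuous_norm continuous_const).inter
        (isClosed_le (continuous_norm.mul continuous_const) continuous_re))
  have hcos : -1 < Real.cos φ := by
    simpa using Real.cos_lt_cos_of_nonneg_of_le_pi hφ₀ le_rfl hφ
  have hslit : ∀ x ∈ K, x ∈ slitPlane := by
    rintro x ⟨hεx, -, hre⟩
    rw [mem_slitPlane_iff, or_iff_not_imp_right, not_not]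
    intro him
    have hnorm : ‖x‖ = |x.re| := by simpa [him, Real.sqrt_sq_eq_abs] using norm_eq_sqrt_sq_add_sq x
    cases abs_cases x.re <;> nlinarith
  have hcont : Continuous bdf2Symbol := by unfold bdf2Symbol; fun_prop
  obtain ⟨m, hm, hmK⟩ := hK.exists_forall_le' (a := 0) hcont.norm.continuousOn
    fun x hx ↦ norm_pos_iff.mpr (bdf2Symbol_ne_zero (hslit x hx) (hx.2.1.trans_lt hM))
  obtain ⟨c, hc⟩ := hK.exists_bound_of_continuousOn hcont.continuousOn
  refine ⟨m, hm, c, fun x hεx hxM harg ↦ ?_⟩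
  have hxK : x ∈ K := by
    refine ⟨hεx, hxM, ?_⟩
    rw [← norm_mul_cos_arg x, ← Real.cos_abs (arg x)]
    gcongr
    exact Real.cos_le_cos_of_nonneg_of_le_pi (abs_nonneg _) hφ.le harg
  exact ⟨hmK x hxK, hc x hxK⟩

lemma norm_cpow_sub_cpow_bdf2Symbol_div_le_of_norm_le {τ γ : ℝ} {a : ℂ} (hτ : 0 < τ) (ha : a ≠ 0)
    (harg : |arg a| ≤ π - 1) (hx : ‖(τ : ℂ) * a‖ ≤ 1 / (4 * (|γ| + 1))) :
    ‖a ^ (γ : ℂ) - (bdf2Symbol (τ * a) / τ) ^ (γ : ℂ)‖ ≤ 6 * |γ| * τ ^ 2 * ‖a‖ ^ (γ + 2) := by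
  set x : ℂ := τ * a
  have hτ0 : (τ : ℂ) ≠ 0 := ofReal_ne_zero.mpr hτ.ne'
  have hx0 : x ≠ 0 := mul_ne_zero hτ0 ha
  have hxγ : ‖x‖ * (4 * (|γ| + 1)) ≤ 1 := (le_div_iff₀ (by positivity)).mp hx
  set s := (bdf2Symbol x - x) / x
  have hs : ‖s‖ ≤ 2 * ‖x‖ ^ 2 := by
    rw [norm_div, div_le_iff₀ (norm_pos_iff.mpr hx0)]
    nlinarith [norm_bdf2Symbol_sub_self_le (x := x) (by nlinarith [abs_nonneg γ, norm_nonneg x])]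
  have hs8 : ‖s‖ ≤ 1 / 8 := by nlinarith [abs_nonneg γ, norm_nonneg x]
  have hγs : 3 / 2 * |γ| * ‖s‖ ≤ 1 := by nlinarith [abs_nonneg γ, norm_nonneg x, norm_nonneg s]
  have hsplit : bdf2Symbol x / τ = a * (1 + s) := by
    rw [div_eq_iff hτ0, mul_right_comm, ← mul_comm (τ : ℂ), mul_add, mul_one, mul_div_cancel₀ _ hx0]
    ring
  have hnorm_x : ‖x‖ = τ * ‖a‖ := by rw [norm_mul, norm_real, Real.norm_of_nonneg hτ.le]
  rw [hsplit, mul_cpow_of_arg_add_arg_mem ha (one_add_ne_zero_of_norm_le (by linarith))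
    (arg_add_arg_one_add_mem (by linarith) (by linarith [norm_nonneg s])),
    ← mul_one_sub, norm_mul, norm_cpow_real, norm_sub_rev]
  calc ‖a‖ ^ γ * ‖(1 + s) ^ (γ : ℂ) - 1‖ ≤ ‖a‖ ^ γ * (3 * |γ| * (2 * (τ * ‖a‖) ^ 2)) := by
        gcongr
        refine (norm_one_add_cpow_sub_one_le (by linarith) hγs).trans ?_
        rw [← hnorm_x]
        gcongr
    _ = 6 * |γ| * τ ^ 2 * ‖a‖ ^ (γ + 2) := by
        rw [rpow_add (norm_pos_iff.mpr ha), rpow_two]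
        ring

lemma norm_cpow_sub_cpow_bdf2Symbol_div_le_of_small {τ γ : ℝ} {z w : ℂ} (hτ : 0 < τ)
    (hz : z ≠ 0) (hwz : 10 * ‖w‖ ≤ ‖z‖) (harg : |arg z| ≤ π - 6 / 5)
    (hsmall : τ * ‖z‖ ≤ 1 / (8 * (|γ| + 1))) :
    ‖(z + w) ^ (γ : ℂ) - (bdf2Symbol (τ * (z + w)) / τ) ^ (γ : ℂ)‖
      ≤ 6 * |γ| * 2 ^ |γ + 2| * τ ^ 2 * ‖z‖ ^ (γ + 2) := by
  obtain ⟨hza, haz⟩ := norm_add_bounds_of_ten_mul_norm_le hwz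
  have hz0 : 0 < ‖z‖ := norm_pos_iff.mpr hz
  have ha0 : 0 < ‖z + w‖ := by linarith
  have harga : |arg (z + w)| ≤ π - 1 :=
    (abs_arg_add_le_of_ten_mul_norm_le hz hwz (by linarith)).trans (by linarith)
  have hx : ‖(τ : ℂ) * (z + w)‖ ≤ 1 / (4 * (|γ| + 1)) := by
    rw [norm_mul, norm_real, Real.norm_of_nonneg hτ.le]
    calc τ * ‖z + w‖ ≤ 2 * (τ * ‖z‖) := by nlinarith
      _ ≤ 2 * (1 / (8 * (|γ| + 1))) := by gcongr
      _ = 1 / (4 * (|γ| + 1)) := by field_simp; ring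
  calc _ ≤ 6 * |γ| * τ ^ 2 * ‖z + w‖ ^ (γ + 2) :=
        norm_cpow_sub_cpow_bdf2Symbol_div_le_of_norm_le hτ (norm_pos_iff.mp ha0) harga hx
    _ ≤ 6 * |γ| * τ ^ 2 * (2 ^ |γ + 2| * ‖z‖ ^ (γ + 2)) := by
        gcongr
        exact rpow_le_mul_rpow_of_le_mul_of_le_mul ha0 hz0 (by linarith) (by linarith) _
    _ = 6 * |γ| * 2 ^ |γ + 2| * τ ^ 2 * ‖z‖ ^ (γ + 2) := by ring

lemma norm_cpow_sub_cpow_le_of_large {τ γ ε S m c : ℝ} {a b z : ℂ} (hτ : 0 < τ) (hε : 0 < ε)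
    (hm : 0 < m) (hza : ‖z‖ ≤ 2 * ‖a‖) (haz : ‖a‖ ≤ 2 * ‖z‖) (hmb : m ≤ τ * ‖b‖)
    (hbc : τ * ‖b‖ ≤ c) (hlarge : ε ≤ τ * ‖z‖) (hzS : τ * ‖z‖ ≤ S) :
    ‖a ^ (γ : ℂ) - b ^ (γ : ℂ)‖
      ≤ 2 * max 2 (max (c / ε) (S / m)) ^ |γ| / ε ^ 2 * τ ^ 2 * ‖z‖ ^ (γ + 2) := by
  set R := max 2 (max (c / ε) (S / m))
  have hz0 : 0 < ‖z‖ := pos_of_mul_pos_right (hε.trans_le hlarge) hτ.le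
  have hb : ‖b‖ ≤ R * ‖z‖ := by
    refine le_of_mul_le_mul_left ?_ hτ
    calc τ * ‖b‖ ≤ c / ε * ε := by rwa [div_mul_cancel₀ _ hε.ne']
      _ ≤ R * (τ * ‖z‖) :=
          mul_le_mul ((le_max_left _ _).trans (le_max_right _ _)) hlarge hε.le (by positivity)
      _ = τ * (R * ‖z‖) := by ring
  have hb' : ‖z‖ ≤ R * ‖b‖ := by
    refine le_of_mul_le_mul_left ?_ hτ
    calc τ * ‖z‖ ≤ S / m * m := by rwa [div_mul_cancel₀ _ hm.ne']
      _ ≤ R * (τ * ‖b‖) :=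
          mul_le_mul ((le_max_right _ _).trans (le_max_right _ _)) hmb hm.le (by positivity)
      _ = τ * (R * ‖b‖) := by ring
  calc ‖a ^ (γ : ℂ) - b ^ (γ : ℂ)‖ ≤ 2 * R ^ |γ| * ‖z‖ ^ γ :=
        norm_cpow_sub_cpow_le_of_le_mul hz0 (haz.trans (by gcongr; exact le_max_left _ _))
          (hza.trans (by gcongr; exact le_max_left _ _)) hb hb' γ
    _ ≤ 2 * R ^ |γ| * ‖z‖ ^ γ * (τ * ‖z‖ / ε) ^ 2 :=
        le_mul_of_one_le_right (by positivity) (one_le_pow₀ ((one_le_div hε).mpr hlarge))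
    _ = 2 * R ^ |γ| / ε ^ 2 * τ ^ 2 * ‖z‖ ^ (γ + 2) := by
        rw [rpow_add hz0, rpow_two]
        field_simp

lemma exists_norm_cpow_sub_cpow_bdf2Symbol_div_le_of_large {γ ε θ S : ℝ} (hε : 0 < ε)
    (hθ₀ : 0 ≤ θ) (hθ : θ < π - 3 / 20) (hS : 11 / 10 * S < 2 * π) :
    ∃ C > 0, ∀ τ > 0, ∀ z w : ℂ, 10 * ‖w‖ ≤ ‖z‖ → |arg z| ≤ θ → ε ≤ τ * ‖z‖ → τ * ‖z‖ ≤ S →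
      ‖(z + w) ^ (γ : ℂ) - (bdf2Symbol (τ * (z + w)) / τ) ^ (γ : ℂ)‖
        ≤ C * τ ^ 2 * ‖z‖ ^ (γ + 2) := by
  obtain ⟨m, hm, c, hbounds⟩ := exists_bounds_norm_bdf2Symbol (half_pos hε) hS
    (φ := θ + 3 / 20) (by positivity) (by linarith)
  refine ⟨2 * max 2 (max (c / ε) (S / m)) ^ |γ| / ε ^ 2, by positivity,
    fun τ hτ z w hwz harg hlarge hzS ↦ ?_⟩
  have hz : z ≠ 0 := norm_pos_iff.mp (pos_of_mul_pos_right (hε.trans_le hlarge) hτ.le)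
  obtain ⟨hza, haz⟩ := norm_add_bounds_of_ten_mul_norm_le hwz
  have hnx : ‖(τ : ℂ) * (z + w)‖ = τ * ‖z + w‖ := by
    rw [norm_mul, norm_real, Real.norm_of_nonneg hτ.le]
  have hτb : τ * ‖bdf2Symbol (τ * (z + w)) / τ‖ = ‖bdf2Symbol (τ * (z + w))‖ := by
    rw [norm_div, norm_real, Real.norm_of_nonneg hτ.le, mul_div_cancel₀ _ hτ.ne']
  obtain ⟨hmb, hbc⟩ := hbounds (τ * (z + w)) (by rw [hnx]; nlinarith) (by rw [hnx]; nlinarith)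
    (by rw [arg_real_mul _ hτ]; linarith [abs_arg_add_le_of_ten_mul_norm_le hz hwz (by linarith)])
  exact norm_cpow_sub_cpow_le_of_large hτ hε hm (by linarith) (by linarith) (hτb ▸ hmb)
    (hτb ▸ hbc) hlarge hzS

lemma eleven_div_ten_mul_pi_div_sin_lt_two_pi :
    11 / 10 * (π / Real.sin (1 / 10 + π / 2)) < 2 * π := by
  have hsin : 199 / 200 ≤ Real.sin (1 / 10 + π / 2) := by
    rw [Real.sin_add_pi_div_two]
    linarith [Real.one_sub_sq_div_two_le_cos (x := 1 / 10)]
  rw [← mul_div_assoc, div_lt_iff₀ (by linarith)]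
  nlinarith [pi_pos]

/-- Lemma 3.2(3): second-order symbol approximation estimate. For every L ≥ 0 and
γ ∈ ℝ there exist θ ∈ (π/2, π), κ > 0, τ* > 0 and C > 0 such that for
τ ∈ (0, τ*], |w| ≤ L and z on the contour Γ^τ_{θ,κ},
|(z+w)^γ − (δ_{τ,2}(e^{−τ(z+w)}))^γ| ≤ C τ² |z|^{γ+2}. -/
theorem stmt_5 (L γ : ℝ) (hL : 0 ≤ L) :
    ∃ θ ∈ Set.Ioo (Real.pi / 2) Real.pi, ∃ κ > (0 : ℝ), ∃ τs > (0 : ℝ), ∃ C > (0 : ℝ),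
      ∀ τ ∈ Set.Ioc (0 : ℝ) τs, ∀ w : ℂ, ‖w‖ ≤ L →
        ∀ z : ℂ,
          ((κ ≤ ‖z‖ ∧ ‖z‖ ≤ Real.pi / (τ * Real.sin θ) ∧ |z.arg| = θ)
            ∨ (‖z‖ = κ ∧ |z.arg| ≤ θ)) →
          ‖(z + w) ^ (γ : ℂ)
              - ((((1 - Complex.exp (-(τ : ℂ) * (z + w)))
                  + (1 - Complex.exp (-(τ : ℂ) * (z + w))) ^ 2 / 2) / (τ : ℂ)) ^ (γ : ℂ))‖
            ≤ C * τ ^ 2 * ‖z‖ ^ (γ + 2) := by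
  set θ := 1 / 10 + π / 2 with hθ
  set ε := 1 / (8 * (|γ| + 1))
  obtain ⟨C, hC, hbound_large⟩ :=
    exists_norm_cpow_sub_cpow_bdf2Symbol_div_le_of_large (γ := γ) (θ := θ) (by positivity : 0 < ε)
      (by positivity) (by linarith [pi_gt_three]) eleven_div_ten_mul_pi_div_sin_lt_two_pi
  refine ⟨θ, ⟨by linarith, by linarith [pi_gt_three]⟩, 10 * (L + 1), by positivity,
    ε / (10 * (L + 1)), by positivity, max (6 * |γ| * 2 ^ |γ + 2|) C, lt_max_of_lt_right hC, ?_⟩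
  rintro τ ⟨hτ, hτε⟩ w hw z hz
  have hτκ : τ * (10 * (L + 1)) ≤ ε := (le_div_iff₀ (by positivity)).mp hτε
  have hκz : 10 * (L + 1) ≤ ‖z‖ := hz.elim (·.1) (·.1.ge)
  have hz0 : z ≠ 0 := norm_pos_iff.mp (by linarith)
  have hwz : 10 * ‖w‖ ≤ ‖z‖ := by linarith
  have hargz : |arg z| ≤ θ := hz.elim (·.2.2.le) (·.2)
  rw [neg_mul]
  change ‖(z + w) ^ (γ : ℂ) - (bdf2Symbol (τ * (z + w)) / τ) ^ (γ : ℂ)‖ ≤ _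
  rcases le_or_gt (τ * ‖z‖) ε with hsmall | hlarge
  · refine (norm_cpow_sub_cpow_bdf2Symbol_div_le_of_small hτ hz0 hwz ?_ hsmall).trans ?_
    · linarith [pi_gt_three]
    · gcongr
      exact le_max_left _ _
  · have hzS : τ * ‖z‖ ≤ π / Real.sin θ := by
      rcases hz with ⟨-, hzθ, -⟩ | ⟨hzκ, -⟩
      · rwa [← le_div_iff₀' hτ, div_div, mul_comm]
      · rw [hzκ] at hlarge
        linarith
    refine (hbound_large τ hτ z w hwz hargz hlarge.le hzS).trans ?_
    gcongr
    exact le_max_right _ _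
end

section
/- Let r ∈ (0, 1], ω ∈ [0, π], and set ζ = r e^{−iω}. Then the complex number 3/2 − 2ζ + ζ²/2 has nonnegative real part and nonnegative imaginary part; in particular, 3/2 − 2r cos ω + (r²/2) cos 2ω ≥ 0 and 2r sin ω − (r²/2) sin 2ω ≥ 0. -/
open Real Complex

/-- Key computation in Lemma 3.3: for r ∈ (0,1], ω ∈ [0,π] and ζ = r e^{−iω},
the number 3/2 − 2ζ + ζ²/2 has nonnegative real and imaginary parts; in
particular 3/2 − 2r cos ω + (r²/2) cos 2ω ≥ 0 and 2r sin ω − (r²/2) sin 2ω ≥ 0. -/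
theorem stmt_7 (r ω : ℝ) (hr : r ∈ Set.Ioc 0 1) (hω : ω ∈ Set.Icc 0 Real.pi)
    (ζ : ℂ) (hζ : ζ = (r : ℂ) * Complex.exp (-Complex.I * (ω : ℂ))) :
    0 ≤ (3 / 2 - 2 * ζ + ζ ^ 2 / 2).re ∧
    0 ≤ (3 / 2 - 2 * ζ + ζ ^ 2 / 2).im ∧
    0 ≤ 3 / 2 - 2 * r * Real.cos ω + r ^ 2 / 2 * Real.cos (2 * ω) ∧
    0 ≤ 2 * r * Real.sin ω - r ^ 2 / 2 * Real.sin (2 * ω) := by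
  obtain ⟨hr0, hr1⟩ := hr
  obtain ⟨hω0, hωπ⟩ := hω
  have hs : 0 ≤ Real.sin ω := Real.sin_nonneg_of_nonneg_of_le_pi hω0 hωπ
  have hc : Real.cos ω ≤ 1 := Real.cos_le_one ω
  have hc' : -1 ≤ Real.cos ω := Real.neg_one_le_cos ω
  have hre : 0 ≤ 3 / 2 - 2 * r * Real.cos ω + r ^ 2 / 2 * Real.cos (2 * ω) := by
    rw [Real.cos_two_mul]
    nlinarith [sq_nonneg (1 - r * Real.cos ω), sq_nonneg (Real.cos ω),
      mul_pos hr0 hr0]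
  have him : 0 ≤ 2 * r * Real.sin ω - r ^ 2 / 2 * Real.sin (2 * ω) := by
    rw [Real.sin_two_mul]
    have key : 2 * r * Real.sin ω - r ^ 2 / 2 * (2 * Real.sin ω * Real.cos ω)
        = r * Real.sin ω * (2 - r * Real.cos ω) := by ring
    rw [key]
    apply mul_nonneg (mul_nonneg hr0.le hs)
    nlinarith
  have hζre : ζ.re = r * Real.cos ω := by
    rw [hζ]
    simp [Complex.exp_re, Complex.exp_im, Complex.cos_ofReal_re]
  have hζim : ζ.im = -(r * Real.sin ω) := by
    rw [hζ]
    simp [Complex.exp_re, Complex.exp_im]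
  refine ⟨?_, ?_, hre, him⟩
  · have : (3 / 2 - 2 * ζ + ζ ^ 2 / 2).re
        = 3 / 2 - 2 * ζ.re + (ζ.re ^ 2 - ζ.im ^ 2) / 2 := by
      simp [pow_two, Complex.mul_re]
    rw [this, hζre, hζim]
    have := hre
    rw [Real.cos_two_mul] at this
    nlinarith [Real.sin_sq_add_cos_sq ω]
  · have : (3 / 2 - 2 * ζ + ζ ^ 2 / 2).im
        = -2 * ζ.im + (2 * ζ.re * ζ.im) / 2 := by
      simp [pow_two, Complex.mul_im]
      ring
    rw [this, hζre, hζim]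
    have := him
    rw [Real.sin_two_mul] at this
    nlinarith
end

section
/- For every real L ≥ 0 and every real number γ there exist θ ∈ (π/2, π), κ > 0, τ* > 0 and a constant C > 0 such that for every τ ∈ (0, τ*], every complex number w with |w| ≤ L, and every z on the contour Γ^τ_{θ,κ}, one has |(z+w)^γ − ((1 − e^{−τ(z+w)})/τ)^γ| ≤ C τ |z|^{γ+1}, where complex powers are taken with the principal branch. -/
open Real Complex

/-!
Write `s = z + w` and `E(u) = (1 - e^{-u}) / u`, so that the backward Euler symbol at `s` is
`s · E(τs)`. If `τ|z|` is small, `E(τs) = 1 + O(τ|s|)` and `1 + w/z` are close to `1`, so their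
arguments are small; since `θ = 2π/3` stays away from `π`, the principal power then factors as
`s^γ · E(τs)^γ`, and `|1 - E(τs)^γ| = O(τ|z|)`. Otherwise `z` lies on a ray of the contour, where
`τ|z| ≤ π / sin θ` and `τ|Im z| ≤ π`; then `τs` ranges over a compact set free of the zeros `2πik`
of `1 - e^{-u}`, on which `|E|^γ` is bounded, and both powers are `O(|z|^γ) = O(τ|z|^{γ+1})`.
-/

namespace BackwardEuler

/-- `δ_{τ,1}(e^{-τs}) = s · E(τs)`; at `u = 0` the junk value `E 0 = 0` replaces the limit `1`. -/
noncomputable def eulerRatio (u : ℂ) : ℂ := (1 - Complex.exp (-u)) / u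

lemma symbol_eq_mul_eulerRatio {τ : ℝ} (hτ : τ ≠ 0) (s : ℂ) :
    (1 - Complex.exp (-(τ : ℂ) * s)) / (τ : ℂ) = s * eulerRatio (τ * s) := by
  rcases eq_or_ne s 0 with rfl | hs
  · simp
  · have hτ' : (τ : ℂ) ≠ 0 := ofReal_ne_zero.mpr hτ
    rw [eulerRatio, neg_mul]
    field_simp

lemma norm_eulerRatio_sub_one_le {u : ℂ} (hu0 : u ≠ 0) (hu : ‖u‖ ≤ 1) :
    ‖eulerRatio u - 1‖ ≤ ‖u‖ := by
  have hrepr : eulerRatio u - 1 = -(Complex.exp (-u) - 1 - -u) / u := by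
    rw [eulerRatio]; field_simp; ring
  have hquad := norm_exp_sub_one_sub_id_le (x := -u) (by rwa [norm_neg])
  rw [hrepr, norm_div, norm_neg, div_le_iff₀ (norm_pos_iff.mpr hu0)]
  simpa [sq] using hquad

lemma eulerRatio_ne_zero {u : ℂ} (hu0 : u ≠ 0) (him : |u.im| < 2 * π) : eulerRatio u ≠ 0 := by
  refine div_ne_zero (sub_ne_zero.mpr fun h => hu0 ?_) hu0
  obtain ⟨n, hn⟩ := Complex.exp_eq_one_iff.mp h.symm
  have hnim : u.im = -(n * (2 * π)) := by
    simpa using congrArg Complex.im (neg_eq_iff_eq_neg.mp hn)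
  have hn0 : n = 0 := by
    rw [hnim, abs_neg, abs_mul, abs_of_pos (by positivity : 0 < 2 * π)] at him
    have hlt : |(n : ℝ)| < 1 := by nlinarith [pi_pos]
    exact Int.abs_lt_one_iff.mp (by exact_mod_cast hlt)
  simpa [hn0] using neg_eq_iff_eq_neg.mp hn

lemma exists_rpow_norm_eulerRatio_le (γ : ℝ) {r : ℝ} (hr : 0 < r) (R : ℝ) {M : ℝ}
    (hM : M < 2 * π) :
    ∃ K, ∀ u : ℂ, r ≤ ‖u‖ → ‖u‖ ≤ R → |u.im| ≤ M → ‖eulerRatio u‖ ^ γ ≤ K := by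
  set S : Set ℂ := {u | r ≤ ‖u‖ ∧ ‖u‖ ≤ R ∧ |u.im| ≤ M}
  have hS : IsCompact S := by
    refine Metric.isCompact_of_isClosed_isBounded ?_ ?_
    · exact (isClosed_le continuous_const continuous_norm).inter
        ((isClosed_le continuous_norm continuous_const).inter
          (isClosed_le (continuous_abs.comp continuous_im) continuous_const))
    · exact (Metric.isBounded_closedBall (x := (0 : ℂ)) (r := R)).subset
        fun u hu => by simpa using hu.2.1
  have hcont : ContinuousOn (fun u => ‖eulerRatio u‖ ^ γ) S := by
    intro u hu
    have hu0 : u ≠ 0 := norm_pos_iff.mp (hr.trans_le hu.1)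
    have hE : ContinuousAt eulerRatio u :=
      (continuous_const.sub (Complex.continuous_exp.comp continuous_neg)).continuousAt.div
        continuousAt_id hu0
    refine (hE.norm.rpow_const (Or.inl ?_)).continuousWithinAt
    exact norm_ne_zero_iff.mpr (eulerRatio_ne_zero hu0 (hu.2.2.trans_lt hM))
  obtain ⟨K, hK⟩ := hS.exists_bound_of_continuousOn hcont
  exact ⟨K, fun u h1 h2 h3 => (le_abs_self _).trans (hK u ⟨h1, h2, h3⟩)⟩

lemma abs_arg_le_of_norm_sub_one_le {c : ℂ} (hc : ‖c - 1‖ ≤ 1 / 2) :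
    |arg c| ≤ 3 / 2 * ‖c - 1‖ := by
  have hlog := norm_log_one_add_half_le_self hc
  rw [add_sub_cancel] at hlog
  rw [← log_im]
  exact (abs_im_le_norm _).trans hlog

lemma ne_zero_of_norm_sub_one_le {c : ℂ} (hc : ‖c - 1‖ ≤ 1 / 2) : c ≠ 0 := by
  rintro rfl
  norm_num at hc

lemma arg_add_arg_mem_Ioc {x c : ℂ} (hc : ‖c - 1‖ ≤ 1 / 2)
    (harg : |arg x| + 3 / 2 * ‖c - 1‖ < π) : arg x + arg c ∈ Set.Ioc (-π) π := by
  have hc' := abs_le.mp (abs_arg_le_of_norm_sub_one_le hc)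
  constructor <;> linarith [neg_abs_le (arg x), le_abs_self (arg x)]

lemma abs_arg_mul_le {x c : ℂ} (hx : x ≠ 0) (hc : ‖c - 1‖ ≤ 1 / 2)
    (harg : |arg x| + 3 / 2 * ‖c - 1‖ < π) : |arg (x * c)| ≤ |arg x| + 3 / 2 * ‖c - 1‖ := by
  rw [arg_mul hx (ne_zero_of_norm_sub_one_le hc) (arg_add_arg_mem_Ioc hc harg)]
  exact (abs_add_le _ _).trans (add_le_add_right (abs_arg_le_of_norm_sub_one_le hc) _)

lemma mul_cpow_of_norm_sub_one_le {x c : ℂ} (hx : x ≠ 0) (hc : ‖c - 1‖ ≤ 1 / 2)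
    (harg : |arg x| + 3 / 2 * ‖c - 1‖ < π) (y : ℂ) : (x * c) ^ y = x ^ y * c ^ y := by
  have hc0 := ne_zero_of_norm_sub_one_le hc
  rw [cpow_def_of_ne_zero (mul_ne_zero hx hc0), cpow_def_of_ne_zero hx, cpow_def_of_ne_zero hc0,
    log_mul hx hc0 (arg_add_arg_mem_Ioc hc harg), add_mul, Complex.exp_add]

lemma norm_one_sub_cpow_le {c : ℂ} {γ : ℝ} (hc : ‖c - 1‖ ≤ 1 / 2)
    (hγ : |γ| * (3 / 2 * ‖c - 1‖) ≤ 1) : ‖1 - c ^ (γ : ℂ)‖ ≤ 3 * |γ| * ‖c - 1‖ := by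
  have hlog : ‖log c * γ‖ ≤ |γ| * (3 / 2 * ‖c - 1‖) := by
    have hlog := norm_log_one_add_half_le_self hc
    rw [add_sub_cancel] at hlog
    rw [norm_mul, norm_real, Real.norm_eq_abs, mul_comm]
    exact mul_le_mul_of_nonneg_left hlog (abs_nonneg γ)
  rw [cpow_def_of_ne_zero (ne_zero_of_norm_sub_one_le hc), norm_sub_rev]
  linarith [norm_exp_sub_one_le (hlog.trans hγ)]

lemma norm_cpow_sub_mul_cpow_le {x c : ℂ} {γ : ℝ} (hx : x ≠ 0) (hc : ‖c - 1‖ ≤ 1 / 2)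
    (harg : |arg x| + 3 / 2 * ‖c - 1‖ < π) (hγ : |γ| * (3 / 2 * ‖c - 1‖) ≤ 1) :
    ‖x ^ (γ : ℂ) - (x * c) ^ (γ : ℂ)‖ ≤ ‖x‖ ^ γ * (3 * |γ| * ‖c - 1‖) := by
  rw [mul_cpow_of_norm_sub_one_le hx hc harg, ← mul_one_sub, norm_mul, norm_cpow_real]
  exact mul_le_mul_of_nonneg_left (norm_one_sub_cpow_le hc hγ) (by positivity)

lemma rpow_le_two_rpow_abs_mul_rpow {x t : ℝ} (p : ℝ) (hx : 0 < x) (h1 : x / 2 ≤ t)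
    (h2 : t ≤ 2 * x) : t ^ p ≤ 2 ^ |p| * x ^ p := by
  rcases le_or_gt 0 p with hp | hp
  · calc t ^ p ≤ (2 * x) ^ p := rpow_le_rpow (by linarith) h2 hp
      _ = 2 ^ |p| * x ^ p := by rw [abs_of_nonneg hp, mul_rpow zero_le_two hx.le]
  · calc t ^ p ≤ (x / 2) ^ p := rpow_le_rpow_of_nonpos (by positivity) h1 hp.le
      _ = 2 ^ |p| * x ^ p := by
        rw [abs_of_neg hp, div_rpow hx.le zero_le_two, rpow_neg zero_le_two, div_eq_inv_mul]

lemma half_norm_le_norm_add {E : Type*} [SeminormedAddCommGroup E] {z w : E}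
    (h : ‖w‖ ≤ ‖z‖ / 2) : ‖z‖ / 2 ≤ ‖z + w‖ := by
  have htri := norm_sub_norm_le z (-w)
  rw [sub_neg_eq_add, norm_neg] at htri
  linarith

lemma norm_add_le_two_mul_norm {E : Type*} [SeminormedAddCommGroup E] {z w : E}
    (h : ‖w‖ ≤ ‖z‖) : ‖z + w‖ ≤ 2 * ‖z‖ := by
  linarith [norm_add_le z w]

lemma norm_cpow_sub_symbol_cpow_le {τ γ : ℝ} {s : ℂ} (hτ : 0 < τ) (hs : s ≠ 0)
    (hsmall : τ * ‖s‖ ≤ 1 / 2) (harg : |arg s| + 3 / 2 * (τ * ‖s‖) < π)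
    (hγ : |γ| * (3 / 2 * (τ * ‖s‖)) ≤ 1) :
    ‖s ^ (γ : ℂ) - ((1 - Complex.exp (-(τ : ℂ) * s)) / (τ : ℂ)) ^ (γ : ℂ)‖
      ≤ 3 * |γ| * τ * ‖s‖ ^ (γ + 1) := by
  have hu : ‖(τ : ℂ) * s‖ = τ * ‖s‖ := by simp [abs_of_pos hτ]
  have hE : ‖eulerRatio (τ * s) - 1‖ ≤ τ * ‖s‖ :=
    hu ▸ norm_eulerRatio_sub_one_le (mul_ne_zero (ofReal_ne_zero.mpr hτ.ne') hs) (by linarith)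
  rw [symbol_eq_mul_eulerRatio hτ.ne']
  calc _ ≤ ‖s‖ ^ γ * (3 * |γ| * ‖eulerRatio (τ * s) - 1‖) :=
        norm_cpow_sub_mul_cpow_le hs (by linarith) (by linarith)
          (le_trans (by gcongr) hγ)
    _ ≤ ‖s‖ ^ γ * (3 * |γ| * (τ * ‖s‖)) := by gcongr
    _ = 3 * |γ| * τ * ‖s‖ ^ (γ + 1) := by
        rw [rpow_add_one (norm_ne_zero_iff.mpr hs)]; ring

lemma exists_norm_cpow_sub_symbol_cpow_le (γ : ℝ) {r : ℝ} (hr : 0 < r) (R : ℝ) {M : ℝ}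
    (hM : M < 2 * π) :
    ∃ K > 0, ∀ τ > 0, ∀ s : ℂ, r ≤ τ * ‖s‖ → τ * ‖s‖ ≤ R → τ * |s.im| ≤ M →
      ‖s ^ (γ : ℂ) - ((1 - Complex.exp (-(τ : ℂ) * s)) / (τ : ℂ)) ^ (γ : ℂ)‖ ≤ K * ‖s‖ ^ γ := by
  obtain ⟨K, hK⟩ := exists_rpow_norm_eulerRatio_le γ hr R hM
  refine ⟨1 + |K|, by positivity, fun τ hτ s h1 h2 h3 => ?_⟩
  have hu : ‖(τ : ℂ) * s‖ = τ * ‖s‖ := by simp [abs_of_pos hτ]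
  have him : |((τ : ℂ) * s).im| = τ * |s.im| := by simp [abs_mul, abs_of_pos hτ]
  have hE := hK _ (hu ▸ h1) (hu ▸ h2) (him ▸ h3)
  rw [symbol_eq_mul_eulerRatio hτ.ne']
  calc _ ≤ ‖s ^ (γ : ℂ)‖ + ‖(s * eulerRatio (τ * s)) ^ (γ : ℂ)‖ := norm_sub_le _ _
    _ = ‖s‖ ^ γ + ‖s‖ ^ γ * ‖eulerRatio (τ * s)‖ ^ γ := by
        rw [norm_cpow_real, norm_cpow_real, norm_mul, mul_rpow (norm_nonneg _) (norm_nonneg _)]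
    _ ≤ ‖s‖ ^ γ + ‖s‖ ^ γ * |K| := by gcongr; exact hE.trans (le_abs_self K)
    _ = (1 + |K|) * ‖s‖ ^ γ := by ring

lemma norm_cpow_sub_symbol_cpow_le_of_small {τ γ : ℝ} {z w : ℂ} (hτ : 0 < τ) (hz : z ≠ 0)
    (harg : |arg z| ≤ 2 * π / 3) (hw : ‖w‖ ≤ ‖z‖ / 4) (hsmall : τ * ‖z‖ ≤ 1 / (8 * (|γ| + 1))) :
    ‖(z + w) ^ (γ : ℂ) - ((1 - Complex.exp (-(τ : ℂ) * (z + w))) / (τ : ℂ)) ^ (γ : ℂ)‖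
      ≤ 3 * |γ| * 2 ^ |γ + 1| * τ * ‖z‖ ^ (γ + 1) := by
  have hz' : 0 < ‖z‖ := norm_pos_iff.mpr hz
  have hlo := half_norm_le_norm_add (show ‖w‖ ≤ ‖z‖ / 2 by linarith)
  have hhi := norm_add_le_two_mul_norm (show ‖w‖ ≤ ‖z‖ by linarith)
  have hsmall' : 8 * (|γ| + 1) * (τ * ‖z‖) ≤ 1 := by
    rwa [le_div_iff₀ (by positivity), mul_comm] at hsmall
  have hτz : τ * ‖z‖ ≤ 1 / 8 := by nlinarith [abs_nonneg γ, mul_pos hτ hz']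
  have hγz : |γ| * (τ * ‖z‖) ≤ 1 / 8 := by nlinarith
  have hτs : τ * ‖z + w‖ ≤ 2 * (τ * ‖z‖) := by nlinarith
  have hγs := mul_le_mul_of_nonneg_left hτs (abs_nonneg γ)
  have hc : ‖(1 + w / z) - 1‖ ≤ 1 / 4 := by
    rw [add_sub_cancel_left, norm_div, div_le_iff₀ hz']
    linarith
  have hargs : |arg (z + w)| ≤ 2 * π / 3 + 3 / 8 := by
    rw [show z + w = z * (1 + w / z) by field_simp]
    linarith [abs_arg_mul_le hz (hc.trans (by norm_num)) (by linarith [pi_gt_three])]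
  calc _ ≤ 3 * |γ| * τ * ‖z + w‖ ^ (γ + 1) :=
        norm_cpow_sub_symbol_cpow_le hτ (norm_pos_iff.mp (by linarith)) (by linarith)
          (by linarith [pi_gt_three]) (by linarith)
    _ ≤ 3 * |γ| * τ * (2 ^ |γ + 1| * ‖z‖ ^ (γ + 1)) := by
        gcongr
        exact rpow_le_two_rpow_abs_mul_rpow _ hz' hlo hhi
    _ = 3 * |γ| * 2 ^ |γ + 1| * τ * ‖z‖ ^ (γ + 1) := by ring

lemma exists_norm_cpow_sub_symbol_cpow_le_of_large (γ : ℝ) {δ : ℝ} (hδ : 0 < δ) (R : ℝ) :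
    ∃ K > 0, ∀ τ > 0, ∀ z w : ℂ, ‖w‖ ≤ ‖z‖ / 4 → τ * ‖w‖ ≤ 1 → δ ≤ τ * ‖z‖ → τ * ‖z‖ ≤ R →
      τ * |z.im| ≤ π →
      ‖(z + w) ^ (γ : ℂ) - ((1 - Complex.exp (-(τ : ℂ) * (z + w))) / (τ : ℂ)) ^ (γ : ℂ)‖
        ≤ K * τ * ‖z‖ ^ (γ + 1) := by
  obtain ⟨K, hK, hbound⟩ :=
    exists_norm_cpow_sub_symbol_cpow_le γ (half_pos hδ) (2 * R) (M := π + 1)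
      (by linarith [pi_gt_three])
  refine ⟨K * 2 ^ |γ| / δ, by positivity, fun τ hτ z w hw hτw h1 h2 h3 => ?_⟩
  have hz' : 0 < ‖z‖ := (mul_pos_iff_of_pos_left hτ).mp (hδ.trans_le h1)
  have hlo := half_norm_le_norm_add (show ‖w‖ ≤ ‖z‖ / 2 by linarith)
  have hhi := norm_add_le_two_mul_norm (show ‖w‖ ≤ ‖z‖ by linarith)
  have him : τ * |(z + w).im| ≤ π + 1 := by
    have hsum : |(z + w).im| ≤ |z.im| + ‖w‖ := by
      rw [add_im]
      exact (abs_add_le _ _).trans (add_le_add_right (abs_im_le_norm w) _)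
    nlinarith
  calc _ ≤ K * ‖z + w‖ ^ γ := hbound τ hτ _ (by nlinarith) (by nlinarith) him
    _ ≤ K * (2 ^ |γ| * ‖z‖ ^ γ) := by
        gcongr
        exact rpow_le_two_rpow_abs_mul_rpow _ hz' hlo hhi
    _ ≤ K * (2 ^ |γ| * ‖z‖ ^ γ) * (τ * ‖z‖ / δ) :=
        le_mul_of_one_le_right (by positivity) ((one_le_div hδ).mpr h1)
    _ = K * 2 ^ |γ| / δ * τ * ‖z‖ ^ (γ + 1) := by
        rw [rpow_add_one hz'.ne']
        ring

/-- The contour `Γ^τ_{θ,κ}`. -/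
def contour (τ θ κ : ℝ) : Set ℂ :=
  {z | (κ ≤ ‖z‖ ∧ ‖z‖ ≤ π / (τ * Real.sin θ) ∧ |z.arg| = θ) ∨ (‖z‖ = κ ∧ |z.arg| ≤ θ)}

variable {τ θ κ : ℝ} {z : ℂ}

lemma le_norm_of_mem_contour (hz : z ∈ contour τ θ κ) : κ ≤ ‖z‖ := by
  rcases hz with ⟨h, -, -⟩ | ⟨h, -⟩
  exacts [h, h.ge]

lemma abs_arg_le_of_mem_contour (hz : z ∈ contour τ θ κ) : |arg z| ≤ θ := by
  rcases hz with ⟨-, -, h⟩ | ⟨-, h⟩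
  exacts [h.le, h]

lemma mul_norm_le_and_mul_abs_im_le_of_mem_contour (hz : z ∈ contour τ θ κ) (hκ : κ < ‖z‖)
    (hτ : 0 < τ) (hθ : 0 < Real.sin θ) : τ * ‖z‖ ≤ π / Real.sin θ ∧ τ * |z.im| ≤ π := by
  rcases hz with ⟨-, hR, harg⟩ | ⟨h, -⟩
  · have him : |z.im| = ‖z‖ * Real.sin θ := by
      rw [← norm_mul_sin_arg, abs_mul, abs_norm, ← abs_of_pos hθ]
      rcases abs_eq (harg ▸ abs_nonneg _) |>.mp harg with h | h
      · rw [h]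
      · rw [h, Real.sin_neg, abs_neg]
    rw [le_div_iff₀ (mul_pos hτ hθ)] at hR
    rw [le_div_iff₀ hθ, him]
    constructor <;> linarith
  · exact absurd h hκ.ne'

end BackwardEuler

open BackwardEuler

/-- Lemma 3.1(3): first-order symbol approximation estimate. For every L ≥ 0 and
γ ∈ ℝ there exist θ ∈ (π/2, π), κ > 0, τ* > 0 and C > 0 such that for
τ ∈ (0, τ*], |w| ≤ L and z on the contour Γ^τ_{θ,κ},
|(z+w)^γ − ((1 − e^{−τ(z+w)})/τ)^γ| ≤ C τ |z|^{γ+1}. -/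
theorem stmt_12 (L γ : ℝ) (hL : 0 ≤ L) :
    ∃ θ ∈ Set.Ioo (Real.pi / 2) Real.pi, ∃ κ > (0 : ℝ), ∃ τs > (0 : ℝ), ∃ C > (0 : ℝ),
      ∀ τ ∈ Set.Ioc (0 : ℝ) τs, ∀ w : ℂ, ‖w‖ ≤ L →
        ∀ z : ℂ,
          ((κ ≤ ‖z‖ ∧ ‖z‖ ≤ Real.pi / (τ * Real.sin θ) ∧ |z.arg| = θ)
            ∨ (‖z‖ = κ ∧ |z.arg| ≤ θ)) →
          ‖(z + w) ^ (γ : ℂ)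
              - (((1 - Complex.exp (-(τ : ℂ) * (z + w))) / (τ : ℂ)) ^ (γ : ℂ))‖
            ≤ C * τ * ‖z‖ ^ (γ + 1) := by
  set δ : ℝ := 1 / (8 * (|γ| + 1))
  have hδ : 0 < δ := by positivity
  have hθ : 2 * π / 3 ∈ Set.Ioo (π / 2) π := ⟨by linarith [pi_pos], by linarith [pi_pos]⟩
  have hsinθ : 0 < Real.sin (2 * π / 3) := sin_pos_of_pos_of_lt_pi (by positivity) hθ.2
  obtain ⟨K, hK, hlarge⟩ :=
    exists_norm_cpow_sub_symbol_cpow_le_of_large γ hδ (π / Real.sin (2 * π / 3))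
  set κ : ℝ := 4 * L + 1
  have hκ : 0 < κ := by positivity
  refine ⟨2 * π / 3, hθ, κ, hκ, δ / (2 * κ), by positivity, 3 * |γ| * 2 ^ |γ + 1| + K,
    by positivity, ?_⟩
  rintro τ ⟨hτ, hτs⟩ w hw z hz
  replace hz : z ∈ contour τ (2 * π / 3) κ := hz
  have hκz := le_norm_of_mem_contour hz
  have hτκ : τ * κ ≤ δ / 2 := by linarith [(le_div_iff₀ (by positivity)).mp hτs]
  rcases le_or_gt (τ * ‖z‖) δ with hsmall | hbig
  · calc _ ≤ 3 * |γ| * 2 ^ |γ + 1| * τ * ‖z‖ ^ (γ + 1) :=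
          norm_cpow_sub_symbol_cpow_le_of_small hτ (norm_pos_iff.mp (hκ.trans_le hκz))
            (abs_arg_le_of_mem_contour hz) (by linarith) hsmall
      _ ≤ _ := by gcongr; exact le_add_of_nonneg_right hK.le
  · have hκz' : κ < ‖z‖ := lt_of_not_ge fun h => by nlinarith
    have hδ1 : δ ≤ 1 := div_le_one_of_le₀ (by linarith [abs_nonneg γ]) (by positivity)
    have hτw : τ * ‖w‖ ≤ τ * κ := mul_le_mul_of_nonneg_left (by linarith) hτ.le
    obtain ⟨hR, him⟩ := mul_norm_le_and_mul_abs_im_le_of_mem_contour hz hκz' hτ hsinθ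
    calc _ ≤ K * τ * ‖z‖ ^ (γ + 1) :=
          hlarge τ hτ z w (by linarith) (by linarith) hbig.le hR him
      _ ≤ _ := by gcongr; exact le_add_of_nonneg_left (by positivity)
end
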